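/- Let E be a sharply orthocomplete S-dominating effect algebra. Then the center C(E) is a complete Boolean algebra which is bifull in E. -/

import Mathlib

universe u v

/-- An effect algebra: a partial algebra `(E; ⊕, 0, 1)` with `0 ≠ 1`, where `⊕` is
partially defined (domain `D`), commutative and associative where defined, every
element has a unique orthosupplement (`compl`, skolemizing axiom (Eiii)), and
`1 ⊕ x` defined implies `x = 0`. -/
structure EffectAlgebra (E : Type u) where
  D : E → E → Prop
  oplus : E → E → E
  zero : E
  one : E
  zero_ne_one : zero ≠ one
  D_comm : ∀ x y, D x y → D y x
  oplus_comm : ∀ x y, D x y → oplus x y = oplus y x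
  assoc : ∀ x y z, D x y → D (oplus x y) z →
      D y z ∧ D x (oplus y z) ∧ oplus (oplus x y) z = oplus x (oplus y z)
  assoc' : ∀ x y z, D y z → D x (oplus y z) →
      D x y ∧ D (oplus x y) z ∧ oplus (oplus x y) z = oplus x (oplus y z)
  compl : E → E
  D_compl : ∀ x, D x (compl x)
  oplus_compl : ∀ x, oplus x (compl x) = one
  compl_unique : ∀ x y, D x y → oplus x y = one → y = compl x
  one_max : ∀ x, D one x → x = zero

namespace EffectAlgebra

variable {E : Type u} (A : EffectAlgebra E)

/-- The induced order: `x ≤ y` iff `x ⊕ z = y` for some `z`. -/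
def le (x y : E) : Prop := ∃ z, A.D x z ∧ A.oplus x z = y

def IsLB (S : Set E) (m : E) : Prop := ∀ x ∈ S, A.le m x
def IsUB (S : Set E) (m : E) : Prop := ∀ x ∈ S, A.le x m

/-- `m` is the infimum of `S` computed within the subposet `P`. -/
def IsInfIn (P : Set E) (S : Set E) (m : E) : Prop :=
  m ∈ P ∧ A.IsLB S m ∧ ∀ z ∈ P, A.IsLB S z → A.le z m

/-- `m` is the supremum of `S` computed within the subposet `P`. -/
def IsSupIn (P : Set E) (S : Set E) (m : E) : Prop :=
  m ∈ P ∧ A.IsUB S m ∧ ∀ z ∈ P, A.IsUB S z → A.le m z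

/-- `w` is sharp iff the meet `w ∧ w'` exists in `E` and equals `0`. -/
def Sharp (w : E) : Prop := A.IsInfIn Set.univ {w, A.compl w} A.zero

/-- The set `S(E)` of sharp elements. -/
def sharpSet : Set E := {w | A.Sharp w}

def HasMeet (x y : E) : Prop := ∃ m, A.IsInfIn Set.univ {x, y} m
def HasJoin (x y : E) : Prop := ∃ j, A.IsSupIn Set.univ {x, y} j

/-- Every `x` has a least sharp element above it, which is the infimum of the sharp
elements above `x` both in `E` and in `S(E)`. -/
def SharplyDominating : Prop :=
  ∀ x : E, ∃ w, A.Sharp w ∧ A.le x w ∧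
    A.IsInfIn Set.univ {v | A.Sharp v ∧ A.le x v} w ∧
    A.IsInfIn A.sharpSet {v | A.Sharp v ∧ A.le x v} w

/-- Sharply dominating, and `x ∧ w` exists for every `x ∈ E`, `w ∈ S(E)`. -/
def SDominating : Prop :=
  A.SharplyDominating ∧ ∀ x w : E, A.Sharp w → A.HasMeet x w

end EffectAlgebra

/-- `SumDef A l s` : the orthosum of the finite list `l` is defined and equals `s`. -/
inductive EffectAlgebra.SumDef {E : Type u} (A : EffectAlgebra E) : List E → E → Prop
  | nil : EffectAlgebra.SumDef A [] A.zero
  | cons {x : E} {l : List E} {s : E} : EffectAlgebra.SumDef A l s → A.D x s →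
      EffectAlgebra.SumDef A (x :: l) (A.oplus x s)

namespace EffectAlgebra

variable {E : Type u} (A : EffectAlgebra E)

/-- A family is orthogonal iff every finite subfamily has a defined orthosum. -/
def Orthogonal {ι : Type v} (x : ι → E) : Prop :=
  ∀ l : List ι, l.Nodup → ∃ s, A.SumDef (l.map x) s

/-- The set of finite partial orthosums of a family. -/
def finiteSums {ι : Type v} (x : ι → E) : Set E :=
  {s | ∃ l : List ι, l.Nodup ∧ A.SumDef (l.map x) s}

/-- `v = ⊕ x` : the family is orthogonal and `v` is the supremum in `E` of all
finite partial orthosums. -/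
def HasOrthoSum {ι : Type v} (x : ι → E) (v : E) : Prop :=
  A.Orthogonal x ∧ A.IsSupIn Set.univ (A.finiteSums x) v

/-- Every family dominated elementwise by an orthogonal family of sharp
elements has an orthosum. -/
def SharplyOrthocomplete : Prop :=
  ∀ (ι : Type u) (x w : ι → E), (∀ k, A.Sharp (w k)) → A.Orthogonal w →
    (∀ k, A.le (x k) (w k)) → ∃ v, A.HasOrthoSum x v

/-- `c` is central: for every `y` the meets `y ∧ c`, `y ∧ c'` exist and
`y = (y ∧ c) ∨ (y ∧ c')`. -/
def Central (c : E) : Prop :=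
  ∀ y : E, ∃ m₁ m₂, A.IsInfIn Set.univ {y, c} m₁ ∧
    A.IsInfIn Set.univ {y, A.compl c} m₂ ∧ A.IsSupIn Set.univ {m₁, m₂} y

/-- The center `C(E)`. -/
def centerSet : Set E := {c | A.Central c}

def CentrallyDominating : Prop :=
  ∀ x : E, ∃ c, A.Central c ∧ A.le x c ∧
    A.IsInfIn Set.univ {d | A.Central d ∧ A.le x d} c ∧
    A.IsInfIn A.centerSet {d | A.Central d ∧ A.le x d} c

def CentrallyOrthocomplete : Prop :=
  ∀ (ι : Type u) (x c : ι → E), (∀ k, A.Central (c k)) → A.Orthogonal c →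
    (∀ k, A.le (x k) (c k)) → ∃ v, A.HasOrthoSum x v

/-- `P` is bifull in `E`: for `S ⊆ P`, the join of `S` in `P` exists iff the join
of `S` in `E` exists, and then they coincide. -/
def Bifull (P : Set E) : Prop :=
  ∀ S ⊆ P, (∀ s, A.IsSupIn P S s → A.IsSupIn Set.univ S s) ∧
    (∀ s, A.IsSupIn Set.univ S s → A.IsSupIn P S s)

/-- The subposet `P` is a complete lattice: every subset of `P` has a supremum
(and an infimum) computed within `P`. -/
def CompleteIn (P : Set E) : Prop :=
  ∀ S ⊆ P, (∃ s, A.IsSupIn P S s) ∧ (∃ m, A.IsInfIn P S m)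

/-- `E` is a complete lattice. -/
def Complete : Prop :=
  ∀ S : Set E, (∃ s, A.IsSupIn Set.univ S s) ∧ (∃ m, A.IsInfIn Set.univ S m)

/-- The induced order of `E` is a lattice. -/
def LatticeOrdered : Prop := ∀ x y : E, A.HasMeet x y ∧ A.HasJoin x y

/-- `x ↔ y` : `x ∨ y = x ⊕ (y ⊖ (x ∧ y))`. -/
def Compatible (x y : E) : Prop :=
  ∃ m j z, A.IsInfIn Set.univ {x, y} m ∧ A.IsSupIn Set.univ {x, y} j ∧
    A.D m z ∧ A.oplus m z = y ∧ A.D x z ∧ A.oplus x z = j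

/-- An MV-effect algebra: a lattice effect algebra all of whose pairs of elements
are compatible. -/
def MV : Prop := A.LatticeOrdered ∧ ∀ x y : E, A.Compatible x y

/-- `nx = x ⊕ ⋯ ⊕ x` (`n` times) is defined. -/
def nTimesDef (n : ℕ) (x : E) : Prop := ∃ s, A.SumDef (List.replicate n x) s

/-- `ord x < ∞` for every nonzero `x`. -/
def IsArchimedean : Prop := ∀ x : E, x ≠ A.zero → ∃ n : ℕ, ¬ A.nTimesDef n x

def Atom (a : E) : Prop := a ≠ A.zero ∧ ∀ b, A.le b a → b = A.zero ∨ b = a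

def Atomic : Prop := ∀ x : E, x ≠ A.zero → ∃ a, A.Atom a ∧ A.le a x

/-- The subposet `P` (closed under `'`) is an orthomodular lattice. -/
def OrthomodularIn (P : Set E) : Prop :=
  (∀ x ∈ P, ∀ y ∈ P, (∃ m, A.IsInfIn P {x, y} m) ∧ (∃ j, A.IsSupIn P {x, y} j)) ∧
  A.zero ∈ P ∧ A.one ∈ P ∧ (∀ x ∈ P, A.compl x ∈ P) ∧
  (∀ x ∈ P, A.IsInfIn P {x, A.compl x} A.zero ∧ A.IsSupIn P {x, A.compl x} A.one) ∧
  (∀ x ∈ P, ∀ y ∈ P, A.le x y →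
    ∃ m, A.IsInfIn P {y, A.compl x} m ∧ A.IsSupIn P {x, m} y)

def DistributiveIn (P : Set E) : Prop :=
  ∀ x ∈ P, ∀ y ∈ P, ∀ z ∈ P, ∀ jyz mxy mxz m : E,
    A.IsSupIn P {y, z} jyz → A.IsInfIn P {x, y} mxy → A.IsInfIn P {x, z} mxz →
    A.IsInfIn P {x, jyz} m → A.IsSupIn P {mxy, mxz} m

/-- The subposet `P` is a Boolean algebra (complemented distributive lattice with
bounds, complement given by `'`). -/
def BooleanIn (P : Set E) : Prop :=
  (∀ x ∈ P, ∀ y ∈ P, (∃ m, A.IsInfIn P {x, y} m) ∧ (∃ j, A.IsSupIn P {x, y} j)) ∧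
  A.zero ∈ P ∧ A.one ∈ P ∧ (∀ x ∈ P, A.compl x ∈ P) ∧
  (∀ x ∈ P, A.IsInfIn P {x, A.compl x} A.zero ∧ A.IsSupIn P {x, A.compl x} A.one) ∧
  A.DistributiveIn P

/-- A block: a maximal set of pairwise compatible elements. -/
def Block (M : Set E) : Prop :=
  (∀ x ∈ M, ∀ y ∈ M, A.Compatible x y) ∧
  ∀ N : Set E, M ⊆ N → (∀ x ∈ N, ∀ y ∈ N, A.Compatible x y) → N = M

def AtomIn (M : Set E) (a : E) : Prop :=
  a ∈ M ∧ a ≠ A.zero ∧ ∀ b ∈ M, A.le b a → b = A.zero ∨ b = a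

def AtomicIn (M : Set E) : Prop :=
  ∀ x ∈ M, x ≠ A.zero → ∃ a, A.AtomIn M a ∧ A.le a x

end EffectAlgebra

/-!
In any effect algebra the centre is a Boolean algebra, and a finite orthosum of central
elements is central and is their join. Sharp orthocompleteness lets one add arbitrary orthogonal
families `d` of central elements: if `v = ⊕ dᵢ`, then for every `y` the orthosum `m = ⊕ (y ∧ dᵢ)`
exists; writing `y = m ⊕ r`, one gets `r = y ∧ v'` by adjoining the least sharp element above `r`
to the family `d`, and then `m = y ∧ v`, so `v` is central. Finally, by Zorn's lemma a subset `S`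
of the centre contains, below its members, a maximal orthogonal family of central elements; its
orthosum is the supremum of `S` in `E` and is central, which gives completeness and bifullness.
-/

theorem List.exists_map_some_eq_of_none_notMem {α : Type*} :
    ∀ {l : List (Option α)}, none ∉ l → ∃ L : List α, L.map some = l
  | [], _ => ⟨[], rfl⟩
  | none :: _, h => absurd List.mem_cons_self h
  | some a :: _, h =>
    let ⟨L, hL⟩ := exists_map_some_eq_of_none_notMem fun h' => h (List.mem_cons_of_mem _ h')
    ⟨a :: L, by rw [List.map_cons, hL]⟩

namespace EffectAlgebra

variable {E : Type u} {A : EffectAlgebra E}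

section Arithmetic

lemma compl_compl (x : E) : A.compl (A.compl x) = x :=
  (A.compl_unique (A.compl x) x (A.D_comm _ _ (A.D_compl x))
    (by rw [A.oplus_comm _ _ (A.D_comm _ _ (A.D_compl x)), A.oplus_compl])).symm

lemma compl_one : A.compl A.one = A.zero :=
  A.one_max _ (A.D_compl A.one)

lemma compl_zero : A.compl A.zero = A.one := by
  rw [← compl_one (A := A), compl_compl]

lemma D_one_zero : A.D A.one A.zero := by
  simpa only [compl_one] using A.D_compl A.one

lemma oplus_one_zero : A.oplus A.one A.zero = A.one := by
  simpa only [compl_one] using A.oplus_compl A.one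

lemma D_compl_oplus_zero (x : E) : A.D (A.oplus (A.compl x) x) A.zero := by
  rw [A.oplus_comm _ _ (A.D_comm _ _ (A.D_compl x)), A.oplus_compl]
  exact D_one_zero

lemma D_zero_right (x : E) : A.D x A.zero :=
  (A.assoc _ _ _ (A.D_comm _ _ (A.D_compl x)) (D_compl_oplus_zero x)).1

lemma oplus_zero (x : E) : A.oplus x A.zero = x := by
  obtain ⟨-, h, hassoc⟩ := A.assoc _ _ _ (A.D_comm _ _ (A.D_compl x)) (D_compl_oplus_zero x)
  have hone : A.oplus (A.compl x) (A.oplus x A.zero) = A.one := by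
    rw [← hassoc, A.oplus_comm _ _ (A.D_comm _ _ (A.D_compl x)), A.oplus_compl,
      oplus_one_zero]
  rw [A.compl_unique _ _ h hone, compl_compl]

lemma D_zero_left (x : E) : A.D A.zero x := A.D_comm _ _ (D_zero_right x)

lemma zero_oplus (x : E) : A.oplus A.zero x = x := by
  rw [A.oplus_comm _ _ (D_zero_left x), oplus_zero]

lemma oplus_left_cancel {x a b : E} (ha : A.D x a) (hb : A.D x b)
    (h : A.oplus x a = A.oplus x b) : a = b := by
  -- both `a` and `b` equal `(s' ⊕ x)'`, where `s = x ⊕ a = x ⊕ b`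
  have key : ∀ c, A.D x c → A.oplus x c = A.oplus x a →
      c = A.compl (A.oplus (A.compl (A.oplus x a)) x) := by
    intro c hc hcs
    have h1 : A.D (A.oplus x c) (A.compl (A.oplus x a)) := by rw [hcs]; exact A.D_compl _
    obtain ⟨h2, h3, h4⟩ := A.assoc x c _ hc h1
    obtain ⟨-, h5, h6⟩ := A.assoc c _ x h2 (A.D_comm _ _ h3)
    have hc' : A.oplus (A.compl (A.oplus x a)) x = A.compl c := A.compl_unique c _ h5 (by
      rw [← h6, A.oplus_comm _ _ (A.D_comm _ _ h3), ← h4, hcs, A.oplus_compl])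
    rw [hc', compl_compl]
  rw [key a ha rfl, key b hb h.symm]

lemma eq_zero_of_oplus_eq_zero {a b : E} (h : A.D a b) (hab : A.oplus a b = A.zero) :
    a = A.zero ∧ b = A.zero := by
  have h1 : A.D (A.oplus a b) A.one := by rw [hab]; exact D_zero_left _
  have hb : b = A.zero := A.one_max b (A.D_comm _ _ (A.assoc a b A.one h h1).1)
  subst hb
  exact ⟨by rwa [oplus_zero] at hab, rfl⟩

lemma le_refl (x : E) : A.le x x := ⟨A.zero, D_zero_right x, oplus_zero x⟩

lemma zero_le (x : E) : A.le A.zero x := ⟨x, D_zero_left x, zero_oplus x⟩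

lemma le_one (x : E) : A.le x A.one := ⟨A.compl x, A.D_compl x, A.oplus_compl x⟩

lemma le_oplus_left {a b : E} (h : A.D a b) : A.le a (A.oplus a b) := ⟨b, h, rfl⟩

lemma le_oplus_right {a b : E} (h : A.D a b) : A.le b (A.oplus a b) :=
  ⟨a, A.D_comm _ _ h, (A.oplus_comm _ _ h).symm⟩

lemma le_zero_iff {x : E} : A.le x A.zero ↔ x = A.zero :=
  ⟨fun ⟨_, hz, h⟩ => (eq_zero_of_oplus_eq_zero hz h).1, fun h => h ▸ le_refl _⟩

lemma le_trans {x y z : E} (h1 : A.le x y) (h2 : A.le y z) : A.le x z := by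
  obtain ⟨a, ha, rfl⟩ := h1
  obtain ⟨b, hb, rfl⟩ := h2
  obtain ⟨-, h, hassoc⟩ := A.assoc x a b ha hb
  exact ⟨A.oplus a b, h, hassoc.symm⟩

lemma le_antisymm {x y : E} (h1 : A.le x y) (h2 : A.le y x) : x = y := by
  obtain ⟨a, ha, rfl⟩ := h1
  obtain ⟨b, hb, hbx⟩ := h2
  obtain ⟨hab, h, hassoc⟩ := A.assoc x a b ha hb
  have hzero := oplus_left_cancel h (D_zero_right x) (by rw [← hassoc, hbx, oplus_zero])
  rw [(eq_zero_of_oplus_eq_zero hab hzero).1, oplus_zero]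

lemma le_compl_of_D {x y : E} (h : A.D x y) : A.le y (A.compl x) := by
  obtain ⟨h1, h2, hassoc⟩ := A.assoc x y _ h (A.D_compl (A.oplus x y))
  refine ⟨_, h1, A.compl_unique x _ h2 ?_⟩
  rw [← hassoc, A.oplus_compl]

lemma D_of_le_compl {x y : E} (h : A.le x (A.compl y)) : A.D x y := by
  obtain ⟨z, hz, hzy⟩ := h
  have h1 : A.D (A.oplus x z) y := by rw [hzy]; exact A.D_comm _ _ (A.D_compl y)
  obtain ⟨h2, h3, -⟩ := A.assoc x z y hz h1
  rw [A.oplus_comm _ _ h2] at h3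
  exact (A.assoc' x y z (A.D_comm _ _ h2) h3).1

lemma le_compl_comm {x y : E} (h : A.le x (A.compl y)) : A.le y (A.compl x) :=
  le_compl_of_D (D_of_le_compl h)

lemma compl_le_compl {x y : E} (h : A.le x y) : A.le (A.compl y) (A.compl x) :=
  le_compl_comm (by rwa [compl_compl])

lemma le_of_compl_le_compl {x y : E} (h : A.le (A.compl y) (A.compl x)) : A.le x y := by
  simpa only [compl_compl] using compl_le_compl h

lemma oplus_rearrange {a p b q : E} (h1 : A.D a p) (h2 : A.D b q)
    (h : A.D (A.oplus a p) (A.oplus b q)) :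
    A.D a b ∧ A.D p q ∧ A.D (A.oplus a b) (A.oplus p q) ∧
      A.oplus (A.oplus a b) (A.oplus p q) = A.oplus (A.oplus a p) (A.oplus b q) := by
  obtain ⟨h3, h4, h5⟩ := A.assoc' (A.oplus a p) b q h2 h
  obtain ⟨h6, h7, h8⟩ := A.assoc a p b h1 h3
  rw [A.oplus_comm _ _ h6] at h7
  obtain ⟨hab, h9, h10⟩ := A.assoc' a b p (A.D_comm _ _ h6) h7
  have e1 : A.oplus (A.oplus a p) b = A.oplus (A.oplus a b) p := by
    rw [h8, h10, A.oplus_comm _ _ h6]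
  rw [e1] at h4
  obtain ⟨hpq, h11, h12⟩ := A.assoc (A.oplus a b) p q h9 h4
  exact ⟨hab, hpq, h11, by rw [← h12, ← e1, h5]⟩

lemma oplus_le_oplus {a a₁ b b₁ : E} (ha : A.le a a₁) (hb : A.le b b₁)
    (h : A.D a₁ b₁) : A.D a b ∧ A.le (A.oplus a b) (A.oplus a₁ b₁) := by
  obtain ⟨p, hp, rfl⟩ := ha
  obtain ⟨q, hq, rfl⟩ := hb
  obtain ⟨hab, -, hD, heq⟩ := oplus_rearrange hp hq h
  exact ⟨hab, _, hD, heq⟩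

lemma le_of_oplus_le_oplus_left {x a b : E} (ha : A.D x a) (hb : A.D x b)
    (h : A.le (A.oplus x a) (A.oplus x b)) : A.le a b := by
  obtain ⟨c, hc, hceq⟩ := h
  obtain ⟨h1, h2, h3⟩ := A.assoc x a c ha hc
  exact ⟨c, h1, oplus_left_cancel h2 hb (by rw [← h3, hceq])⟩

end Arithmetic

section Bounds

def IsMeet (A : EffectAlgebra E) (x y m : E) : Prop := A.IsInfIn Set.univ {x, y} m

def IsJoin (A : EffectAlgebra E) (x y j : E) : Prop := A.IsSupIn Set.univ {x, y} j

lemma isLB_pair {x y m : E} (hx : A.le m x) (hy : A.le m y) : A.IsLB {x, y} m := by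
  rintro z (rfl | rfl)
  exacts [hx, hy]

lemma isUB_pair {x y m : E} (hx : A.le x m) (hy : A.le y m) : A.IsUB {x, y} m := by
  rintro z (rfl | rfl)
  exacts [hx, hy]

lemma isMeet_intro {x y m : E} (hx : A.le m x) (hy : A.le m y)
    (h : ∀ z, A.le z x → A.le z y → A.le z m) : A.IsMeet x y m :=
  ⟨trivial, isLB_pair hx hy, fun z _ hz => h z (hz x (by simp)) (hz y (by simp))⟩

lemma isJoin_intro {x y j : E} (hx : A.le x j) (hy : A.le y j)
    (h : ∀ z, A.le x z → A.le y z → A.le j z) : A.IsJoin x y j :=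
  ⟨trivial, isUB_pair hx hy, fun z _ hz => h z (hz x (by simp)) (hz y (by simp))⟩

lemma IsMeet.le_left {x y m : E} (h : A.IsMeet x y m) : A.le m x := h.2.1 x (by simp)

lemma IsMeet.le_right {x y m : E} (h : A.IsMeet x y m) : A.le m y := h.2.1 y (by simp)

lemma IsMeet.ge {x y m z : E} (h : A.IsMeet x y m) (h1 : A.le z x) (h2 : A.le z y) :
    A.le z m :=
  h.2.2 z trivial (isLB_pair h1 h2)

lemma IsJoin.le_left {x y j : E} (h : A.IsJoin x y j) : A.le x j := h.2.1 x (by simp)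

lemma IsJoin.le_right {x y j : E} (h : A.IsJoin x y j) : A.le y j := h.2.1 y (by simp)

lemma IsJoin.le {x y j z : E} (h : A.IsJoin x y j) (h1 : A.le x z) (h2 : A.le y z) :
    A.le j z :=
  h.2.2 z trivial (isUB_pair h1 h2)

lemma isMeet_comm {x y m : E} (h : A.IsMeet x y m) : A.IsMeet y x m := by
  rwa [IsMeet, Set.pair_comm]

lemma isJoin_comm {x y j : E} (h : A.IsJoin x y j) : A.IsJoin y x j := by
  rwa [IsJoin, Set.pair_comm]

lemma isMeet_of_le {x y : E} (h : A.le x y) : A.IsMeet x y x :=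
  isMeet_intro (le_refl x) h fun _ hz _ => hz

lemma isMeet_zero_right (y : E) : A.IsMeet y A.zero A.zero :=
  isMeet_intro (zero_le y) (le_refl _) fun _ _ hz => hz

lemma isJoin_zero_left (y : E) : A.IsJoin A.zero y y :=
  isJoin_intro (zero_le y) (le_refl y) fun _ _ hz => hz

lemma isInfIn_unique {P S : Set E} {m m' : E} (h : A.IsInfIn P S m)
    (h' : A.IsInfIn P S m') : m = m' :=
  le_antisymm (h'.2.2 m h.1 h.2.1) (h.2.2 m' h'.1 h'.2.1)

lemma isSupIn_unique {P S : Set E} {m m' : E} (h : A.IsSupIn P S m)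
    (h' : A.IsSupIn P S m') : m = m' :=
  le_antisymm (h.2.2 m' h'.1 h'.2.1) (h'.2.2 m h.1 h.2.1)

lemma IsInfIn.of_univ {P S : Set E} {m : E} (h : A.IsInfIn Set.univ S m) (hm : m ∈ P) :
    A.IsInfIn P S m :=
  ⟨hm, h.2.1, fun z _ hz => h.2.2 z trivial hz⟩

lemma IsSupIn.of_univ {P S : Set E} {m : E} (h : A.IsSupIn Set.univ S m) (hm : m ∈ P) :
    A.IsSupIn P S m :=
  ⟨hm, h.2.1, fun z _ hz => h.2.2 z trivial hz⟩

end Bounds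

section Center

lemma Central.isJoin_compl {c : E} (hc : A.Central c) : A.IsJoin c (A.compl c) A.one := by
  obtain ⟨m, r, hm, hr, hmr⟩ := hc A.one
  rwa [isInfIn_unique hm (isMeet_comm (isMeet_of_le (le_one c))),
    isInfIn_unique hr (isMeet_comm (isMeet_of_le (le_one _)))] at hmr

lemma Central.eq_zero_of_le {c t : E} (hc : A.Central c) (h1 : A.le t c)
    (h2 : A.le t (A.compl c)) : t = A.zero := by
  have ht : A.compl t = A.one :=
    le_antisymm (le_one _) (hc.isJoin_compl.le (le_compl_comm h2) (compl_le_compl h1))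
  rw [← compl_compl t, ht, compl_one]

lemma Central.sharp {c : E} (hc : A.Central c) : A.Sharp c :=
  ⟨trivial, isLB_pair (zero_le _) (zero_le _), fun _ _ hz =>
    le_zero_iff.mpr (hc.eq_zero_of_le (hz _ (by simp)) (hz _ (by simp)))⟩

lemma Central.compl {c : E} (hc : A.Central c) : A.Central (A.compl c) := by
  intro y
  obtain ⟨m, r, hm, hr, hmr⟩ := hc y
  exact ⟨r, m, hr, by rwa [compl_compl], isJoin_comm hmr⟩

lemma central_zero : A.Central A.zero := fun y =>
  ⟨A.zero, y, isMeet_zero_right y, by rw [compl_zero]; exact isMeet_of_le (le_one y),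
    isJoin_zero_left y⟩

lemma central_one : A.Central A.one := by
  simpa only [compl_zero] using (central_zero (A := A)).compl

lemma Central.meet_exists {c : E} (hc : A.Central c) (y : E) : ∃ m, A.IsMeet y c m :=
  let ⟨m, _, hm, _⟩ := hc y
  ⟨m, hm⟩

lemma Central.decomp {c : E} (hc : A.Central c) (y : E) :
    ∃ m r, A.IsMeet y c m ∧ A.IsMeet y (A.compl c) r ∧ A.D m r ∧ A.oplus m r = y := by
  obtain ⟨m, r, hm, hr, hmr⟩ : ∃ m r, A.IsMeet y c m ∧ A.IsMeet y (A.compl c) r ∧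
      A.IsJoin m r y := hc y
  have hD : A.D m r := D_of_le_compl (le_trans hm.le_right (le_compl_comm hr.le_right))
  -- write `m ⊕ r = y ⊕ d`; then `d` lies below both `c` and `c'`
  obtain ⟨d, hd, hyd⟩ := hmr.le (le_oplus_left hD) (le_oplus_right hD)
  obtain ⟨a, ha, hay⟩ := hm.le_left
  obtain ⟨b, hb, hby⟩ := hr.le_left
  have hdr : A.le d r := by
    obtain ⟨h1, h2, h3⟩ := A.assoc m a d ha (by rw [hay]; exact hd)
    rw [← oplus_left_cancel h2 hD (by rw [← h3, hay, hyd])]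
    exact le_oplus_right h1
  have hdm : A.le d m := by
    obtain ⟨h1, h2, h3⟩ := A.assoc r b d hb (by rw [hby]; exact hd)
    rw [← oplus_left_cancel h2 (A.D_comm _ _ hD) (by rw [← h3, hby, hyd, A.oplus_comm _ _ hD])]
    exact le_oplus_right h1
  have hd0 := hc.eq_zero_of_le (le_trans hdm hm.le_right) (le_trans hdr hr.le_right)
  exact ⟨m, r, hm, hr, hD, by rw [← hyd, hd0, oplus_zero]⟩

lemma central_of_decomp {e : E}
    (H : ∀ y, ∃ m r, A.IsMeet y e m ∧ A.IsMeet y (A.compl e) r ∧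
      A.D m r ∧ A.oplus m r = y) : A.Central e := by
  intro y
  obtain ⟨m, r, hm, hr, -, rfl⟩ := H y
  refine ⟨m, r, hm, hr, isJoin_intro hm.le_left hr.le_left fun z h1 h2 => ?_⟩
  obtain ⟨mz, rz, hmz, hrz, hDz, rfl⟩ := H z
  exact (oplus_le_oplus (hmz.ge h1 hm.le_right) (hrz.ge h2 hr.le_right) hDz).2

lemma Central.isMeet_oplus {c a b : E} (hc : A.Central c) (ha : A.le a c)
    (hb : A.le b (A.compl c)) (hD : A.D a b) :
    A.IsMeet (A.oplus a b) c a ∧ A.IsMeet (A.oplus a b) (A.compl c) b := by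
  obtain ⟨m, r, hm, hr, hmr, heq⟩ := hc.decomp (A.oplus a b)
  obtain ⟨p, hp, rfl⟩ := hm.ge (le_oplus_left hD) ha
  obtain ⟨q, hq, rfl⟩ := hr.ge (le_oplus_right hD) hb
  obtain ⟨-, hpq, hD', heq'⟩ := oplus_rearrange hp hq hmr
  have hpq0 := oplus_left_cancel hD' (D_zero_right _) (by rw [heq', heq, oplus_zero])
  obtain ⟨rfl, rfl⟩ := eq_zero_of_oplus_eq_zero hpq hpq0
  rw [oplus_zero] at hm hr
  exact ⟨hm, hr⟩

lemma Central.isJoin_oplus {c a b : E} (hc : A.Central c) (ha : A.le a c)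
    (hb : A.le b (A.compl c)) : A.D a b ∧ A.IsJoin a b (A.oplus a b) := by
  have hD : A.D a b := A.D_comm _ _ (D_of_le_compl (le_trans hb (compl_le_compl ha)))
  refine ⟨hD, isJoin_intro (le_oplus_left hD) (le_oplus_right hD) fun z h1 h2 => ?_⟩
  obtain ⟨m, r, hm, hr, hmr, rfl⟩ := hc.decomp z
  exact (oplus_le_oplus (hm.ge h1 ha) (hr.ge h2 hb) hmr).2

/-- With `e = c ∧ d` and `c = e ⊕ f` (`f = c ∧ d'`), `e' = f ⊕ c'`; an element `y` splits
as `(y ∧ c ∧ d) ⊕ ((y ∧ c ∧ d') ⊕ (y ∧ c'))`, and the two summands are `y ∧ e` and `y ∧ e'`. -/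
lemma Central.meet {c d e : E} (hc : A.Central c) (hd : A.Central d)
    (he : A.IsMeet c d e) : A.Central e := by
  obtain ⟨e₁, f, he₁, hf, hef, hcef⟩ := hd.decomp c
  obtain rfl : e = e₁ := isInfIn_unique he he₁
  have hfc : A.D f (A.compl c) ∧ A.oplus f (A.compl c) = A.compl e := by
    have h1 : A.D (A.oplus e f) (A.compl c) := by rw [hcef]; exact A.D_compl c
    obtain ⟨h2, h3, h4⟩ := A.assoc e f (A.compl c) hef h1
    exact ⟨h2, A.compl_unique e _ h3 (by rw [← h4, hcef, A.oplus_compl])⟩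
  have hfe : A.IsMeet (A.compl e) c f := by
    simpa only [hfc.2] using (hc.isMeet_oplus hf.le_left (le_refl _) hfc.1).1
  apply central_of_decomp
  intro y
  obtain ⟨a, a₂, hya, hya₂, hDa, hy⟩ := hc.decomp y
  obtain ⟨b, b₂, hab, hab₂, hDb, ha⟩ := hd.decomp a
  have hb₂a₂ : A.D b₂ a₂ := D_of_le_compl
    (le_trans hab₂.le_left (le_trans hya.le_right (le_compl_comm hya₂.le_right)))
  have hbr : A.D b (A.oplus b₂ a₂) ∧ A.oplus b (A.oplus b₂ a₂) = y := by
    have h1 : A.D (A.oplus b b₂) a₂ := by rw [ha]; exact hDa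
    obtain ⟨-, h3, h4⟩ := A.assoc b b₂ a₂ hDb h1
    exact ⟨h3, by rw [← h4, ha, hy]⟩
  have hmeet : A.IsMeet y e b := by
    refine isMeet_intro (le_trans hab.le_left hya.le_left)
      (he.ge (le_trans hab.le_left hya.le_right) hab.le_right) fun t ht1 ht2 => ?_
    exact hab.ge (hya.ge ht1 (le_trans ht2 he.le_left)) (le_trans ht2 he.le_right)
  have hmeet' : A.IsMeet y (A.compl e) (A.oplus b₂ a₂) := by
    have hb₂f : A.le b₂ f := hf.ge (le_trans hab₂.le_left hya.le_right) hab₂.le_right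
    refine isMeet_intro (hbr.2 ▸ le_oplus_right hbr.1)
      (hfc.2 ▸ (oplus_le_oplus hb₂f hya₂.le_right hfc.1).2) fun t ht1 ht2 => ?_
    obtain ⟨t₁, t₂, ht₁, ht₂, hDt, rfl⟩ := hc.decomp t
    have h1 : A.le t₁ f := hfe.ge (le_trans ht₁.le_left ht2) ht₁.le_right
    have h2 : A.le t₁ b₂ :=
      hab₂.ge (hya.ge (le_trans ht₁.le_left ht1) ht₁.le_right) (le_trans h1 hf.le_right)
    exact (oplus_le_oplus h2 (hya₂.ge (le_trans ht₂.le_left ht1) ht₂.le_right) hb₂a₂).2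
  exact ⟨b, _, hmeet, hmeet', hbr⟩

lemma Central.join_exists {c d : E} (hc : A.Central c) (hd : A.Central d) :
    ∃ j, A.IsJoin c d j ∧ A.Central j := by
  obtain ⟨e, he⟩ := hd.compl.meet_exists (A.compl c)
  refine ⟨A.compl e, isJoin_intro ?_ ?_ fun z h1 h2 => ?_, (hc.compl.meet hd.compl he).compl⟩
  · exact le_compl_comm he.le_left
  · exact le_compl_comm he.le_right
  · exact le_of_compl_le_compl (by
      rw [compl_compl]; exact he.ge (compl_le_compl h1) (compl_le_compl h2))

lemma Central.isMeet_join {c y z w m my mz : E} (hc : A.Central c)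
    (hw : A.IsJoin y z w) (hm : A.IsMeet c w m)
    (hmy : A.IsMeet c y my) (hmz : A.IsMeet c z mz) : A.IsJoin my mz m := by
  refine isJoin_intro (hm.ge hmy.le_left (le_trans hmy.le_right hw.le_left))
    (hm.ge hmz.le_left (le_trans hmz.le_right hw.le_right)) fun u h1 h2 => ?_
  -- `w` lies below `(u ∧ c) ⊕ c'`, whose meet with `c` is `u ∧ c`
  obtain ⟨mu, -, hmu, -⟩ := hc.decomp u
  have hDu : A.D mu (A.compl c) := D_of_le_compl (by rw [compl_compl]; exact hmu.le_right)
  have hle : ∀ x mx, A.IsMeet c x mx → A.le mx u →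
      A.le x (A.oplus mu (A.compl c)) := by
    intro x mx hmx hmxu
    obtain ⟨m₁, r₁, hx1, hx2, -, rfl⟩ := hc.decomp x
    have hm₁ : A.le m₁ mu := hmu.ge (le_trans (hmx.ge hx1.le_right hx1.le_left) hmxu)
      hx1.le_right
    exact (oplus_le_oplus hm₁ hx2.le_right hDu).2
  have hvc := (hc.isMeet_oplus hmu.le_right (le_refl _) hDu).1
  exact le_trans (hvc.ge (le_trans hm.le_right (hw.le (hle y my hmy h1) (hle z mz hmz h2)))
    hm.le_left) hmu.le_left

end Center

section FiniteSums

lemma SumDef.eq_zero_of_nil {s : E} (h : A.SumDef [] s) : s = A.zero := by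
  cases h
  rfl

lemma SumDef.cons_inv {x : E} {l : List E} {s : E} (h : A.SumDef (x :: l) s) :
    ∃ t, A.SumDef l t ∧ A.D x t ∧ s = A.oplus x t := by
  cases h with
  | cons ht hD => exact ⟨_, ht, hD, rfl⟩

lemma SumDef.perm {l l' : List E} (h : l.Perm l') {s : E} (hs : A.SumDef l s) :
    A.SumDef l' s := by
  induction h generalizing s with
  | nil => exact hs
  | cons x _ ih =>
    obtain ⟨t, ht, hD, rfl⟩ := hs.cons_inv
    exact (ih ht).cons hD
  | swap x y l =>
    obtain ⟨t, ht, hD1, rfl⟩ := hs.cons_inv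
    obtain ⟨t₂, ht₂, hD2, rfl⟩ := ht.cons_inv
    obtain ⟨h1, h2, h3⟩ := A.assoc' y x t₂ hD2 hD1
    rw [A.oplus_comm _ _ h1] at h2
    obtain ⟨h4, h5, h6⟩ := A.assoc x y t₂ (A.D_comm _ _ h1) h2
    rw [← h3, A.oplus_comm _ _ h1, h6]
    exact (ht₂.cons h4).cons h5
  | trans _ _ ih1 ih2 => exact ih2 (ih1 hs)

lemma SumDef.le_of_forall_le {ι : Type v} {x x' : ι → E} :
    ∀ {l : List ι} {s s' : E}, A.SumDef (l.map x) s → A.SumDef (l.map x') s' →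
      (∀ i ∈ l, A.le (x i) (x' i)) → A.le s s'
  | [], _, _, hs, hs', _ => by rw [hs.eq_zero_of_nil, hs'.eq_zero_of_nil]; exact le_refl _
  | i :: _, _, _, hs, hs', hle => by
    obtain ⟨t, ht, -, rfl⟩ := SumDef.cons_inv hs
    obtain ⟨t', ht', hD', rfl⟩ := SumDef.cons_inv hs'
    exact (oplus_le_oplus (hle i List.mem_cons_self)
      (le_of_forall_le ht ht' fun j hj => hle j (List.mem_cons_of_mem _ hj)) hD').2

lemma mem_finiteSums_self {ι : Type v} (x : ι → E) (i : ι) : x i ∈ A.finiteSums x :=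
  ⟨[i], List.nodup_singleton i, by
    simpa only [List.map_cons, List.map_nil, oplus_zero] using SumDef.nil.cons (D_zero_right (x i))⟩

lemma Orthogonal.optionElim {ι : Type v} {d : ι → E} (hd : A.Orthogonal d) {w : E}
    (hw : ∀ e ∈ A.finiteSums d, A.D w e) :
    A.Orthogonal fun o : Option ι => o.elim w d := by
  classical
  have hsome : ∀ l : List (Option ι), l.Nodup → none ∉ l →
      ∃ e ∈ A.finiteSums d, A.SumDef (l.map fun o => o.elim w d) e := by
    intro l hl hn
    obtain ⟨L, rfl⟩ := List.exists_map_some_eq_of_none_notMem hn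
    obtain ⟨e, he⟩ := hd L (hl.of_map _)
    exact ⟨e, ⟨L, hl.of_map _, he⟩, by rwa [List.map_map]⟩
  intro l hl
  by_cases hn : none ∈ l
  · have hperm := List.perm_cons_erase hn
    have hl' := List.nodup_cons.mp (hperm.nodup_iff.mp hl)
    obtain ⟨e, he, hsum⟩ := hsome _ hl'.2 hl'.1
    exact ⟨_, ((hsum.cons (hw e he)).perm (hperm.map _).symm)⟩
  · obtain ⟨e, -, hsum⟩ := hsome l hl hn
    exact ⟨e, hsum⟩

lemma oplus_mem_finiteSums_optionElim {ι : Type v} {d : ι → E} {x e : E}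
    (he : e ∈ A.finiteSums d) (hD : A.D x e) :
    A.oplus x e ∈ A.finiteSums fun o : Option ι => o.elim x d := by
  obtain ⟨l, hl, hsum⟩ := he
  refine ⟨none :: l.map some, List.nodup_cons.mpr ⟨by simp, hl.map (Option.some_injective ι)⟩, ?_⟩
  rw [List.map_cons, List.map_map]
  exact hsum.cons hD

end FiniteSums

section CentralSums

lemma Central.oplus {c t : E} (hc : A.Central c) (ht : A.Central t) (hD : A.D c t) :
    A.Central (A.oplus c t) ∧ A.IsJoin c t (A.oplus c t) := by
  have hj := (hc.isJoin_oplus (le_refl c) (le_compl_of_D hD)).2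
  -- `(c ⊕ t)' = c' ∧ t'`, a meet of central elements
  have hmeet : A.IsMeet (A.compl c) (A.compl t) (A.compl (A.oplus c t)) := by
    refine isMeet_intro (compl_le_compl (le_oplus_left hD)) (compl_le_compl (le_oplus_right hD))
      fun z hz1 hz2 => le_compl_comm (hj.le (le_compl_comm hz1) (le_compl_comm hz2))
  exact ⟨by simpa only [compl_compl] using (hc.compl.meet ht.compl hmeet).compl, hj⟩

lemma SumDef.central_isSup {l : List E} {e : E} (h : A.SumDef l e)
    (hl : ∀ a ∈ l, A.Central a) : A.Central e ∧ A.IsSupIn Set.univ {a | a ∈ l} e := by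
  induction h with
  | nil => exact ⟨central_zero, trivial, fun a ha => absurd ha List.not_mem_nil,
      fun z _ _ => zero_le z⟩
  | @cons x l s _ hD ih =>
    obtain ⟨hs, -, hsUB, hsle⟩ := ih fun a ha => hl a (List.mem_cons_of_mem _ ha)
    obtain ⟨hxs, hj⟩ := (hl x List.mem_cons_self).oplus hs hD
    refine ⟨hxs, trivial, fun a ha => ?_, fun z _ hz => ?_⟩
    · rcases List.mem_cons.mp ha with rfl | ha
      exacts [hj.le_left, le_trans (hsUB a ha) hj.le_right]
    · exact hj.le (hz x List.mem_cons_self)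
        (hsle z trivial fun a ha => hz a (List.mem_cons_of_mem _ ha))

lemma exists_sumDef_of_pairwise {l : List E} (hl : ∀ a ∈ l, A.Central a)
    (hp : l.Pairwise A.D) : ∃ e, A.SumDef l e := by
  induction l with
  | nil => exact ⟨_, SumDef.nil⟩
  | cons x l ih =>
    have hl' : ∀ a ∈ l, A.Central a := fun a ha => hl a (List.mem_cons_of_mem _ ha)
    obtain ⟨hx, hp⟩ := List.pairwise_cons.mp hp
    obtain ⟨e, he⟩ := ih hl' hp
    have hex : A.le e (A.compl x) :=
      (he.central_isSup hl').2.2.2 _ trivial fun a ha => le_compl_of_D (hx a ha)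
    exact ⟨_, he.cons (A.D_comm _ _ (D_of_le_compl hex))⟩

lemma orthogonal_of_pairwise {ι : Type v} {d : ι → E} (hc : ∀ i, A.Central (d i))
    (hp : Pairwise fun i j => A.D (d i) (d j)) : A.Orthogonal d := fun l hl =>
  exists_sumDef_of_pairwise (by simpa using fun i _ => hc i)
    (List.pairwise_map.mpr (hl.pairwise_of_forall_ne fun _ _ _ _ hij => hp hij))

lemma Central.isMeet_oplus_oplus {c t y m n : E} (hc : A.Central c) (hD : A.D c t)
    (hm : A.IsMeet y c m) (hn : A.IsMeet y t n) (hmn : A.D m n) :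
    A.IsMeet y (A.oplus c t) (A.oplus m n) := by
  have htc : A.le t (A.compl c) := le_compl_of_D hD
  refine isMeet_intro ?_ (oplus_le_oplus hm.le_right hn.le_right hD).2 fun z hz1 hz2 => ?_
  · exact (hc.isJoin_oplus hm.le_right (le_trans hn.le_right htc)).2.le hm.le_left hn.le_left
  · obtain ⟨p, q, hp, hq, hpq, rfl⟩ := hc.decomp z
    have hqt : A.le q t :=
      (hc.isMeet_oplus (le_refl c) htc hD).2.ge (le_trans hq.le_left hz2) hq.le_right
    exact (oplus_le_oplus (hm.ge (le_trans hp.le_left hz1) hp.le_right)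
      (hn.ge (le_trans hq.le_left hz1) hqt) hmn).2

lemma isMeet_sumDef {ι : Type v} {d a : ι → E} {y : E} (hc : ∀ i, A.Central (d i))
    (ha : ∀ i, A.IsMeet y (d i) (a i)) :
    ∀ {l : List ι} {e s : E}, A.SumDef (l.map d) e → A.SumDef (l.map a) s → A.IsMeet y e s
  | [], _, _, he, hs => by
    rw [he.eq_zero_of_nil, hs.eq_zero_of_nil]
    exact isMeet_zero_right y
  | i :: _, _, _, he, hs => by
    obtain ⟨e, he', hD, rfl⟩ := SumDef.cons_inv he
    obtain ⟨s, hs', hDs, rfl⟩ := SumDef.cons_inv hs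
    exact (hc i).isMeet_oplus_oplus hD (ha i) (isMeet_sumDef hc ha he' hs') hDs

lemma central_of_mem_finiteSums {ι : Type v} {d : ι → E} (hc : ∀ i, A.Central (d i)) {e : E}
    (he : e ∈ A.finiteSums d) : A.Central e :=
  let ⟨_, _, hsum⟩ := he
  (hsum.central_isSup (by simpa using fun i _ => hc i)).1

lemma le_of_mem_finiteSums {ι : Type v} {d : ι → E} (hc : ∀ i, A.Central (d i)) {e z : E}
    (he : e ∈ A.finiteSums d) (hz : ∀ i, A.le (d i) z) : A.le e z := by
  obtain ⟨l, -, hsum⟩ := he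
  refine (hsum.central_isSup (by simpa using fun i _ => hc i)).2.2.2 z trivial fun a ha => ?_
  obtain ⟨i, -, rfl⟩ := List.mem_map.mp ha
  exact hz i

end CentralSums

section Orthosum

variable {ι : Type v} {d : ι → E} {v y m r : E} {a : ι → E}

lemma exists_isMeet_of_mem_finiteSums (hd : A.Orthogonal d) (hc : ∀ i, A.Central (d i))
    (ha : ∀ i, A.IsMeet y (d i) (a i)) {s : E} (hs : s ∈ A.finiteSums a) :
    ∃ e ∈ A.finiteSums d, A.IsMeet y e s := by
  obtain ⟨l, hl, hsum⟩ := hs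
  obtain ⟨e, he⟩ := hd l hl
  exact ⟨e, ⟨l, hl, he⟩, isMeet_sumDef hc ha he hsum⟩

lemma sup_meets_le (hd : A.Orthogonal d) (hc : ∀ i, A.Central (d i))
    (hv : A.IsSupIn Set.univ (A.finiteSums d) v) (ha : ∀ i, A.IsMeet y (d i) (a i))
    (hm : A.IsSupIn Set.univ (A.finiteSums a) m) : A.le m y ∧ A.le m v := by
  constructor <;> refine hm.2.2 _ trivial fun s hs => ?_ <;>
    obtain ⟨e, he, hse⟩ := exists_isMeet_of_mem_finiteSums hd hc ha hs
  exacts [hse.le_left, le_trans hse.le_right (hv.2.1 e he)]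

lemma le_compl_of_sup_meets_oplus (hc : ∀ i, A.Central (d i))
    (ha : ∀ i, A.IsMeet y (d i) (a i)) (hm : A.IsSupIn Set.univ (A.finiteSums a) m)
    (hr : A.D m r) (hy : A.oplus m r = y) (i : ι) : A.le r (A.compl (d i)) := by
  obtain ⟨p, hp, hpm⟩ := hm.2.1 _ (mem_finiteSums_self a i)
  obtain ⟨a', b, ha', hb, hab, hy'⟩ := (hc i).decomp y
  rw [isInfIn_unique ha' (ha i)] at hab hy'
  obtain ⟨h1, h2, h3⟩ := A.assoc (a i) p r hp (by rw [hpm]; exact hr)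
  have hpr : A.oplus p r = b := oplus_left_cancel h2 hab (by rw [← h3, hpm, hy, hy'])
  exact le_trans (hpr ▸ le_oplus_right h1) hb.le_right

end Orthosum

section SharplyOrthocomplete

variable {ι : Type u} {d : ι → E} {v y m r : E} {a : ι → E}

/-- Proved by adjoining the least sharp element `w` above `r` to the family `d`: the orthosum
`u` of `r` together with `d` is `r ⊕ p` with `v ≤ p`. -/
lemma le_compl_orthosum (hSO : A.SharplyOrthocomplete) (hdom : A.SharplyDominating)
    (hd : A.Orthogonal d) (hc : ∀ i, A.Central (d i))
    (hv : A.IsSupIn Set.univ (A.finiteSums d) v) (hr : ∀ i, A.le r (A.compl (d i))) :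
    A.le r (A.compl v) := by
  have hre : ∀ e ∈ A.finiteSums d, A.D r e := fun e he =>
    A.D_comm _ _ (D_of_le_compl (le_of_mem_finiteSums hc he fun i => le_compl_comm (hr i)))
  obtain ⟨w, hw, hrw, hwmin, -⟩ := hdom r
  have hwe : ∀ e ∈ A.finiteSums d, A.D w e := fun e he => D_of_le_compl
    (hwmin.2.1 _ ⟨(central_of_mem_finiteSums hc he).compl.sharp,
      le_compl_of_D (A.D_comm _ _ (hre e he))⟩)
  obtain ⟨u, -, hu⟩ := hSO (Option ι) (fun o => o.elim r d) (fun o => o.elim w d)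
    (by rintro (_ | i); exacts [hw, (hc i).sharp]) (hd.optionElim hwe)
    (by rintro (_ | i); exacts [hrw, le_refl _])
  have hru : A.le r u := hu.2.1 _ (mem_finiteSums_self _ none)
  obtain ⟨p, hp, hrp⟩ := hru
  have hvp : A.le v p := hv.2.2 p trivial fun e he => le_of_oplus_le_oplus_left (hre e he) hp
    (hrp ▸ hu.2.1 _ (oplus_mem_finiteSums_optionElim he (hre e he)))
  exact le_trans (le_compl_of_D (A.D_comm _ _ hp)) (compl_le_compl hvp)

lemma isMeet_compl_orthosum (hSO : A.SharplyOrthocomplete) (hdom : A.SharplyDominating)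
    (hd : A.Orthogonal d) (hc : ∀ i, A.Central (d i))
    (hv : A.IsSupIn Set.univ (A.finiteSums d) v) (ha : ∀ i, A.IsMeet y (d i) (a i))
    (hm : A.IsSupIn Set.univ (A.finiteSums a) m) (hr : A.D m r) (hy : A.oplus m r = y) :
    A.IsMeet y (A.compl v) r := by
  refine isMeet_intro (hy ▸ le_oplus_right hr) (le_compl_orthosum hSO hdom hd hc hv
    (le_compl_of_sup_meets_oplus hc ha hm hr hy)) fun t ht1 ht2 => ?_
  obtain ⟨z, hz, htz⟩ := id ht1
  -- every finite sum `s = y ∧ e` of the meets is orthogonal to `t ≤ e'`, and `s ⊕ t ≤ y = t ⊕ z`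
  have hmz : A.le m z := hm.2.2 z trivial fun s hs => by
    obtain ⟨e, he, hse⟩ := exists_isMeet_of_mem_finiteSums hd hc ha hs
    obtain ⟨hst, hj⟩ := (central_of_mem_finiteSums hc he).isJoin_oplus hse.le_right
      (le_trans ht2 (compl_le_compl (hv.2.1 e he)))
    refine le_of_oplus_le_oplus_left (A.D_comm _ _ hst) hz ?_
    rw [← A.oplus_comm _ _ hst, htz]
    exact hj.le hse.le_left ht1
  obtain ⟨htm, hle⟩ := oplus_le_oplus (le_refl t) hmz hz
  refine le_of_oplus_le_oplus_left (A.D_comm _ _ htm) hr ?_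
  rw [A.oplus_comm _ _ (A.D_comm _ _ htm), hy, ← htz]
  exact hle

lemma eq_zero_of_le_orthosum_of_le_compl (hSO : A.SharplyOrthocomplete)
    (hdom : A.SharplyDominating) (hd : A.Orthogonal d) (hc : ∀ i, A.Central (d i))
    (hv : A.IsSupIn Set.univ (A.finiteSums d) v) {t : E} (h1 : A.le t v)
    (h2 : A.le t (A.compl v)) : t = A.zero := by
  have hdv : ∀ i, A.IsMeet v (d i) (d i) := fun i =>
    isMeet_comm (isMeet_of_le (hv.2.1 _ (mem_finiteSums_self d i)))
  have h := isMeet_compl_orthosum hSO hdom hd hc hv hdv hv (D_zero_right v) (oplus_zero v)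
  exact le_zero_iff.mp (h.ge h1 h2)

lemma exists_orthoSum_meets (hSO : A.SharplyOrthocomplete) (hd : A.Orthogonal d)
    (hc : ∀ i, A.Central (d i)) (y : E) :
    ∃ (a : ι → E) (m : E), (∀ i, A.IsMeet y (d i) (a i)) ∧ A.HasOrthoSum a m := by
  choose a ha using fun i => (hc i).meet_exists y
  obtain ⟨m, hm⟩ := hSO ι a d (fun i => (hc i).sharp) hd fun i => (ha i).le_right
  exact ⟨a, m, ha, hm⟩

lemma isMeet_orthosum (hSO : A.SharplyOrthocomplete) (hdom : A.SharplyDominating)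
    (hd : A.Orthogonal d) (hc : ∀ i, A.Central (d i))
    (hv : A.IsSupIn Set.univ (A.finiteSums d) v) (ha : ∀ i, A.IsMeet y (d i) (a i))
    (hm : A.HasOrthoSum a m) : A.IsMeet y v m := by
  obtain ⟨hmy, hmv⟩ := sup_meets_le hd hc hv ha hm.2
  refine isMeet_intro hmy hmv fun t ht1 ht2 => ?_
  obtain ⟨b, n, hb, -, hn⟩ := exists_orthoSum_meets hSO hd hc t
  obtain ⟨r, hr, hnr⟩ := (sup_meets_le hd hc hv hb hn).1
  -- the part `t ∧ v'` of `t` vanishes, so `t = ⊕ (t ∧ d i) ≤ ⊕ (y ∧ d i)`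
  have hr0 : r = A.zero := eq_zero_of_le_orthosum_of_le_compl hSO hdom hd hc hv
    (le_trans (hnr ▸ le_oplus_right hr) ht2)
    (isMeet_compl_orthosum hSO hdom hd hc hv hb hn hr hnr).le_right
  rw [← hnr, hr0, oplus_zero]
  refine hn.2.2 m trivial fun s ⟨l, hl, hs⟩ => ?_
  obtain ⟨s', hs'⟩ := hm.1 l hl
  refine le_trans (SumDef.le_of_forall_le hs hs' fun i _ => ?_) (hm.2.2.1 s' ⟨l, hl, hs'⟩)
  exact (ha i).ge (le_trans (hb i).le_left ht1) (hb i).le_right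



lemma orthosum_central (hSO : A.SharplyOrthocomplete) (hdom : A.SharplyDominating)
    (hd : A.Orthogonal d) (hc : ∀ i, A.Central (d i))
    (hv : A.IsSupIn Set.univ (A.finiteSums d) v) : A.Central v := by
  refine central_of_decomp fun y => ?_
  obtain ⟨a, m, ha, hm⟩ := exists_orthoSum_meets hSO hd hc y
  obtain ⟨r, hr, hmr⟩ := (sup_meets_le hd hc hv ha hm.2).1
  exact ⟨m, r, isMeet_orthosum hSO hdom hd hc hv ha hm,
    isMeet_compl_orthosum hSO hdom hd hc hv ha hm.2 hr hmr, hr, hmr⟩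

lemma exists_central_isSup_of_pairwise (hSO : A.SharplyOrthocomplete)
    (hdom : A.SharplyDominating) {T : Set E} (hT : T ⊆ A.centerSet) (hp : T.Pairwise A.D) :
    ∃ v, A.Central v ∧ A.IsSupIn Set.univ T v := by
  have hc : ∀ i : T, A.Central i := fun i => hT i.2
  have hd : A.Orthogonal (Subtype.val : T → E) :=
    orthogonal_of_pairwise hc ((pairwise_subtype_iff_pairwise_set T A.D).mpr hp)
  obtain ⟨v, -, hv⟩ := hSO T Subtype.val Subtype.val (fun i => (hc i).sharp) hd
    fun i => le_refl _
  refine ⟨v, orthosum_central hSO hdom hd hc hv, trivial,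
    fun a ha => hv.2.1 _ (mem_finiteSums_self Subtype.val ⟨a, ha⟩), fun u _ hu => ?_⟩
  exact hv.2.2 u trivial fun e he => le_of_mem_finiteSums hc he fun i => hu i i.2

lemma exists_central_isSup (hSO : A.SharplyOrthocomplete) (hdom : A.SharplyDominating)
    {S : Set E} (hS : S ⊆ A.centerSet) : ∃ v, A.Central v ∧ A.IsSupIn Set.univ S v := by
  obtain ⟨T, ⟨hTc, hTp, hTS⟩, hmax⟩ := zorn_subset
    {T | T ⊆ A.centerSet ∧ T.Pairwise A.D ∧ ∀ a ∈ T, ∃ s ∈ S, A.le a s}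
    fun 𝒞 h𝒞 hchain => ⟨⋃₀ 𝒞, ⟨Set.sUnion_subset fun T hT => (h𝒞 hT).1,
      (Set.pairwise_sUnion hchain.directedOn).mpr fun T hT => (h𝒞 hT).2.1,
      fun a ⟨T, hT, ha⟩ => (h𝒞 hT).2.2 a ha⟩, fun T hT => Set.subset_sUnion_of_mem hT⟩
  obtain ⟨v, hv, hTv⟩ := exists_central_isSup_of_pairwise hSO hdom hTc hTp
  refine ⟨v, hv, trivial, fun s hs => ?_,
    fun u _ hu => hTv.2.2 u trivial fun a ha => ?_⟩
  · obtain ⟨m, t, hm, ht, -, rfl⟩ := hv.decomp s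
    -- `t = s ∧ v'` could be added to `T`, so it lies in `T`, hence below `v ∧ v' = 0`
    have htT : t ∈ T := hmax ⟨Set.insert_subset ((hS hs).meet hv.compl ht) hTc,
        hTp.insert fun b hb _ =>
          have htb := D_of_le_compl (le_trans ht.le_right (compl_le_compl (hTv.2.1 b hb)))
          ⟨htb, A.D_comm _ _ htb⟩,
        Set.forall_mem_insert.mpr ⟨⟨_, hs, ht.le_left⟩, hTS⟩⟩
      (Set.subset_insert _ _) (Set.mem_insert _ _)
    rw [hv.eq_zero_of_le (hTv.2.1 t htT) ht.le_right, oplus_zero]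
    exact hm.le_right
  · obtain ⟨s, hs, has⟩ := hTS a ha
    exact le_trans has (hu s hs)

end SharplyOrthocomplete

section CenterLattice

lemma IsInfIn.isMeet_of_centerSet {x y m : E} (hx : A.Central x) (hy : A.Central y)
    (h : A.IsInfIn A.centerSet {x, y} m) : A.IsMeet x y m := by
  obtain ⟨m₀, hm₀⟩ := hy.meet_exists x
  rwa [isInfIn_unique h (hm₀.of_univ (hx.meet hy hm₀))]

lemma IsSupIn.isJoin_of_centerSet {x y j : E} (hx : A.Central x) (hy : A.Central y)
    (h : A.IsSupIn A.centerSet {x, y} j) : A.IsJoin x y j := by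
  obtain ⟨j₀, hj₀, hj₀c⟩ := hx.join_exists hy
  rwa [isSupIn_unique h (hj₀.of_univ hj₀c)]

lemma booleanIn_centerSet : A.BooleanIn A.centerSet := by
  refine ⟨fun x (hx : A.Central x) y (hy : A.Central y) => ⟨?_, ?_⟩, central_zero, central_one,
    fun x hx => Central.compl hx, fun x (hx : A.Central x) =>
      ⟨IsInfIn.of_univ hx.sharp central_zero, hx.isJoin_compl.of_univ central_one⟩, ?_⟩
  · obtain ⟨m, hm⟩ := hy.meet_exists x
    exact ⟨m, hm.of_univ (hx.meet hy hm)⟩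
  · obtain ⟨j, hj, hjc⟩ := hx.join_exists hy
    exact ⟨j, hj.of_univ hjc⟩
  · intro x (hx : A.Central x) y hy z hz j mxy mxz m hj hmxy hmxz hm
    exact IsSupIn.of_univ (hx.isMeet_join (hj.isJoin_of_centerSet hy hz)
      (hm.isMeet_of_centerSet hx hj.1) (hmxy.isMeet_of_centerSet hx hy)
      (hmxz.isMeet_of_centerSet hx hz)) hm.1

lemma completeIn_centerSet (hSO : A.SharplyOrthocomplete) (hdom : A.SharplyDominating) :
    A.CompleteIn A.centerSet := by
  intro S hS
  obtain ⟨v, hv, hvS⟩ := exists_central_isSup hSO hdom hS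
  obtain ⟨j, hj, hjS⟩ := exists_central_isSup hSO hdom (S := A.compl '' S) <| by
    rintro _ ⟨s, hs, rfl⟩
    exact Central.compl (hS hs)
  refine ⟨⟨v, hvS.of_univ hv⟩, A.compl j, hj.compl, fun s hs => ?_, fun z _ hz => ?_⟩
  · exact le_of_compl_le_compl (by rw [compl_compl]; exact hjS.2.1 _ ⟨s, hs, rfl⟩)
  · refine le_compl_comm (hjS.2.2 _ trivial ?_)
    rintro _ ⟨s, hs, rfl⟩
    exact compl_le_compl (hz s hs)

lemma bifull_centerSet (hSO : A.SharplyOrthocomplete) (hdom : A.SharplyDominating) :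
    A.Bifull A.centerSet := by
  intro S hS
  obtain ⟨v, hv, hvS⟩ := exists_central_isSup hSO hdom hS
  exact ⟨fun s hs => isSupIn_unique (hvS.of_univ hv) hs ▸ hvS,
    fun s hs => isSupIn_unique hvS hs ▸ hvS.of_univ hv⟩

end CenterLattice

end EffectAlgebra

/-- In a sharply orthocomplete S-dominating effect algebra, the center `C(E)` is
a complete Boolean algebra bifull in `E`. -/
theorem stmt9 {E : Type u} (A : EffectAlgebra E)
    (hSO : A.SharplyOrthocomplete) (hSD : A.SDominating) :
    A.CompleteIn A.centerSet ∧ A.BooleanIn A.centerSet ∧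
      A.Bifull A.centerSet :=
  ⟨EffectAlgebra.completeIn_centerSet hSO hSD.1, EffectAlgebra.booleanIn_centerSet,
    EffectAlgebra.bifull_centerSet hSO hSD.1⟩
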